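/- arXiv:1609.00138 — 5 statements merged into one kernel-verified Lean document; each statement's English description precedes it below -/
import Mathlib

section
/- Let δ be a dominant weight of a simple Lie algebra g with simple root set S. Suppose γ ∈ Π_δ satisfies δ − γ = Σ_{α ∈ S'} k_α α with S' ⊂ S and k_α > 0 for all α ∈ S'. Then S' is δ-admissible (every indecomposable component of S' contains a root not orthogonal to δ), and γ lies in the dominant face F_{S'} = Conv(w'·δ : w' ∈ W_{S'}) of the weight polytope K(δ). -/
open scoped RealInnerProductSpace

/-- The reflection in the hyperplane orthogonal to `α`. -/
noncomputable def sRefl {d : ℕ} (α v : EuclideanSpace ℝ (Fin d)) :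
    EuclideanSpace ℝ (Fin d) := v - (2 * ⟪v, α⟫ / ⟪α, α⟫) • α

/-- The orbit of `δ` under the parabolic subgroup `W_{S'}` generated by the reflections
in the roots of `S'`. -/
def parabolicOrbit {d : ℕ} (S' : Finset (EuclideanSpace ℝ (Fin d)))
    (δ : EuclideanSpace ℝ (Fin d)) : Set (EuclideanSpace ℝ (Fin d)) :=
  {v | ∃ l : List (EuclideanSpace ℝ (Fin d)), (∀ α ∈ l, α ∈ S') ∧ v = l.foldr sRefl δ}

/-- `S'` is `δ`-admissible: every indecomposable component of `S'` contains a root not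
orthogonal to `δ`; equivalently every root of `S'` is connected inside `S'`, through
consecutively non-orthogonal roots, to a root non-orthogonal to `δ`. -/
def DeltaAdmissible {d : ℕ} (S' : Finset (EuclideanSpace ℝ (Fin d)))
    (δ : EuclideanSpace ℝ (Fin d)) : Prop :=
  ∀ α ∈ S', ∃ (r : ℕ) (c : ℕ → EuclideanSpace ℝ (Fin d)),
    c 0 = α ∧ (∀ i ≤ r, c i ∈ S') ∧ (∀ i < r, ⟪c i, c (i + 1)⟫ ≠ 0) ∧ ⟪c r, δ⟫ ≠ 0

/-!
Write `δ - γ = ∑_{α ∈ S'} m_α α` and induct on the height `∑ m_α`. If `γ ≠ δ`, some `γ + β` with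
`β ∈ S` is a weight; since the simple roots are independent, comparing coefficients forces
`β ∈ S'` and lowers the height. If `⟪γ, β⟫ ≥ 0`, then `γ` lies on the segment from `γ + β` to
`s_β (γ + β)`, both in `F_{S'}` by induction and `W_{S'}`-invariance. Otherwise `s_β γ` has smaller
height, so it lies in `F_{S'}`, and then so does `γ = s_β (s_β γ)`.

For admissibility: a component `C` of `S'` orthogonal to `δ` is orthogonal to `W_{S'}·δ`, hence to
`γ ∈ F_{S'}`. The part `∑_{α ∈ C} k_α α` of `δ - γ` is then orthogonal to `C`, so it vanishes,
contradicting `k_α > 0`.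
-/

variable {d : ℕ}

local notation "E" => EuclideanSpace ℝ (Fin d)

noncomputable def sReflLinear (α : E) : E →ₗ[ℝ] E where
  toFun := sRefl α
  map_add' u v := by
    simp only [sRefl, inner_add_left, mul_add, add_div, add_smul]
    abel
  map_smul' c v := by
    simp only [sRefl, real_inner_smul_left, RingHom.id_apply]
    rw [mul_left_comm, mul_div_assoc, smul_sub, smul_smul]

lemma sRefl_sRefl {α : E} (hα : α ≠ 0) (v : E) : sRefl α (sRefl α v) = v := by
  have hαα : ⟪α, α⟫ ≠ 0 := inner_self_ne_zero.mpr hα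
  simp only [sRefl, inner_sub_left, real_inner_smul_left]
  rw [sub_sub, ← add_smul, div_mul_cancel₀ _ hαα]
  ring_nf
  simp

lemma self_mem_parabolicOrbit (S' : Finset E) (δ : E) : δ ∈ parabolicOrbit S' δ :=
  ⟨[], by simp, rfl⟩

lemma sRefl_mem_parabolicOrbit {S' : Finset E} {δ β v : E} (hβ : β ∈ S')
    (hv : v ∈ parabolicOrbit S' δ) : sRefl β v ∈ parabolicOrbit S' δ := by
  obtain ⟨l, hl, rfl⟩ := hv
  exact ⟨β :: l, by simpa using ⟨hβ, hl⟩, rfl⟩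

lemma sRefl_mem_convexHull_parabolicOrbit {S' : Finset E} {δ β x : E} (hβ : β ∈ S')
    (hx : x ∈ convexHull ℝ (parabolicOrbit S' δ)) :
    sRefl β x ∈ convexHull ℝ (parabolicOrbit S' δ) := by
  have hx' : sReflLinear β x ∈ sReflLinear β '' convexHull ℝ (parabolicOrbit S' δ) :=
    Set.mem_image_of_mem _ hx
  rw [LinearMap.image_convexHull] at hx'
  refine convexHull_mono ?_ hx'
  rintro _ ⟨v, hv, rfl⟩
  exact sRefl_mem_parabolicOrbit hβ hv

lemma mem_segment_add_sRefl {γ β : E} (hβ : β ≠ 0) (hγβ : 0 ≤ ⟪γ, β⟫) :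
    γ ∈ segment ℝ (γ + β) (sRefl β (γ + β)) := by
  have hββ : 0 < ⟪β, β⟫ := real_inner_self_pos.mpr hβ
  set c := 2 * ⟪γ, β⟫ / ⟪β, β⟫
  have hc : 0 ≤ c := by positivity
  have hrefl : sRefl β (γ + β) = γ - (c + 1) • β := by
    simp only [sRefl, inner_add_left, mul_add, add_div, c]
    rw [mul_div_assoc 2 ⟪β, β⟫, div_self hββ.ne']
    module
  refine ⟨(c + 1) / (c + 2), 1 / (c + 2), by positivity, by positivity, by field_simp; ring, ?_⟩
  rw [hrefl]
  match_scalars <;> field_simp <;> ring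

lemma exists_add_mem_of_chain {P S : Finset E} {δ : E}
    (hchain : ∀ γ ∈ P, ∃ (r : ℕ) (c : ℕ → E),
      c 0 = γ ∧ c r = δ ∧ (∀ i ≤ r, c i ∈ P) ∧ ∀ i < r, c (i + 1) - c i ∈ S)
    {γ : E} (hγ : γ ∈ P) (hγδ : γ ≠ δ) : ∃ β ∈ S, γ + β ∈ P := by
  obtain ⟨r, c, hc0, hcr, hcP, hcS⟩ := hchain γ hγ
  have hr : 0 < r := Nat.pos_of_ne_zero fun hr ↦ hγδ (by rw [← hc0, ← hcr, hr])
  exact ⟨c 1 - c 0, hcS 0 hr, by rw [hc0, add_sub_cancel]; exact hcP 1 hr⟩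

lemma decomposition_sub_smul {S S' : Finset E} (hli : LinearIndepOn ℝ id (S : Set E))
    (hS' : S' ⊆ S) {x β : E} {t : ℝ} {m m₀ : E → ℕ} (hβ : β ∈ S) (ht : 0 < t)
    (hm : x = ∑ α ∈ S', (m α : ℝ) • α) (hm₀ : x - t • β = ∑ α ∈ S, (m₀ α : ℝ) • α) :
    β ∈ S' ∧ x - t • β = ∑ α ∈ S', (m₀ α : ℝ) • α ∧ ∑ α ∈ S', m₀ α < ∑ α ∈ S', m α := by
  classical
  have hsum : ∑ α ∈ S, (if α ∈ S' then (m α : ℝ) else 0) • α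
      = ∑ α ∈ S, ((m₀ α : ℝ) + if α = β then t else 0) • α := by
    simp only [ite_smul, zero_smul, add_smul, Finset.sum_add_distrib, Finset.sum_ite_mem,
      Finset.sum_ite_eq', if_pos hβ, Finset.inter_eq_right.mpr hS']
    rw [← hm, ← hm₀, sub_add_cancel]
  have hcoef := linearIndepOn_finset_iffₛ.mp hli _ _ hsum
  have hβ' : β ∈ S' := by
    by_contra hβ'
    have := hcoef β hβ
    simp only [if_neg hβ', if_pos] at this
    linarith [(m₀ β).cast_nonneg (α := ℝ)]
  have hout : ∀ α ∈ S, α ∉ S' → m₀ α = 0 := by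
    intro α hα hα'
    have := hcoef α hα
    rw [if_neg hα', if_neg (ne_of_mem_of_not_mem hβ' hα').symm] at this
    exact_mod_cast this.symm
  have hheight : ∑ α ∈ S', (m α : ℝ) = ∑ α ∈ S', (m₀ α : ℝ) + t :=
    calc ∑ α ∈ S', (m α : ℝ) = ∑ α ∈ S', ((m₀ α : ℝ) + if α = β then t else 0) :=
          Finset.sum_congr rfl fun α hα ↦ by simpa [hα] using hcoef α (hS' hα)
      _ = ∑ α ∈ S', (m₀ α : ℝ) + t := by
          rw [Finset.sum_add_distrib, Finset.sum_ite_eq', if_pos hβ']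
  refine ⟨hβ', ?_, ?_⟩
  · rw [hm₀]
    exact (Finset.sum_subset hS' fun α hα hα' ↦ by simp [hout α hα hα']).symm
  · exact_mod_cast (by linarith : ∑ α ∈ S', (m₀ α : ℝ) < ∑ α ∈ S', (m α : ℝ))

theorem mem_convexHull_parabolicOrbit {P S S' : Finset E} {δ : E}
    (hli : LinearIndepOn ℝ id (S : Set E)) (hS' : S' ⊆ S)
    (hrefl : ∀ α ∈ S, ∀ γ ∈ P, sRefl α γ ∈ P)
    (hQ : ∀ γ ∈ P, ∃ m : E → ℕ, δ - γ = ∑ α ∈ S, (m α : ℝ) • α)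
    (hstep : ∀ γ ∈ P, γ ≠ δ → ∃ β ∈ S, γ + β ∈ P)
    {γ : E} (hγ : γ ∈ P) {m : E → ℕ} (hm : δ - γ = ∑ α ∈ S', (m α : ℝ) • α) :
    γ ∈ convexHull ℝ (parabolicOrbit S' δ) := by
  induction hn : ∑ α ∈ S', m α using Nat.strong_induction_on generalizing γ m with
  | _ n ih =>
  by_cases hγδ : γ = δ
  · rw [hγδ]
    exact subset_convexHull ℝ _ (self_mem_parabolicOrbit S' δ)
  obtain ⟨β, hβS, hγβ⟩ := hstep γ hγ hγδ
  have hβ0 : β ≠ 0 := hli.ne_zero hβS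
  obtain ⟨m₁, hm₁⟩ := hQ _ hγβ
  obtain ⟨hβ, hm₁', hlt₁⟩ := decomposition_sub_smul hli hS' hβS one_pos hm
    (by rw [one_smul, sub_sub, hm₁])
  rcases le_or_gt 0 ⟪γ, β⟫ with hpos | hneg
  · have h₁ := ih _ (hn ▸ hlt₁) hγβ (by rw [← hm₁', one_smul, sub_sub]) rfl
    exact (convex_convexHull ℝ _).segment_subset h₁
      (sRefl_mem_convexHull_parabolicOrbit hβ h₁) (mem_segment_add_sRefl hβ0 hpos)
  · have hββ : 0 < ⟪β, β⟫ := real_inner_self_pos.mpr hβ0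
    obtain ⟨m₂, hm₂⟩ := hQ _ (hrefl β hβS γ hγ)
    obtain ⟨-, hm₂', hlt₂⟩ := decomposition_sub_smul hli hS' hβS
      (t := -(2 * ⟪γ, β⟫ / ⟪β, β⟫)) (neg_pos.mpr (div_neg_of_neg_of_pos (by linarith) hββ)) hm
      (by rw [← hm₂, sRefl]; module)
    have h₂ := ih _ (hn ▸ hlt₂) (hrefl β hβS γ hγ) (by rw [← hm₂']; simp only [sRefl]; module) rfl
    simpa only [sRefl_sRefl hβ0] using sRefl_mem_convexHull_parabolicOrbit hβ h₂

def LinkedIn (S' : Finset E) (α β : E) : Prop :=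
  ∃ (r : ℕ) (c : ℕ → E), c 0 = α ∧ (∀ i ≤ r, c i ∈ S') ∧ (∀ i < r, ⟪c i, c (i + 1)⟫ ≠ 0) ∧ c r = β

lemma LinkedIn.refl {S' : Finset E} {α : E} (hα : α ∈ S') : LinkedIn S' α α :=
  ⟨0, fun _ ↦ α, rfl, fun _ _ ↦ hα, fun _ h ↦ absurd h (Nat.not_lt_zero _), rfl⟩

lemma LinkedIn.snoc {S' : Finset E} {α β γ : E} (h : LinkedIn S' α β) (hγ : γ ∈ S')
    (hβγ : ⟪β, γ⟫ ≠ 0) : LinkedIn S' α γ := by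
  obtain ⟨r, c, hc0, hcS, hcne, hcr⟩ := h
  refine ⟨r + 1, fun i ↦ if i = r + 1 then γ else c i, by simpa using hc0, ?_, ?_, by simp⟩
  · intro i hi
    dsimp only
    split_ifs
    · exact hγ
    · exact hcS i (by omega)
  · intro i hi
    rcases Nat.lt_succ_iff_lt_or_eq.mp hi with hi | rfl
    · dsimp only
      rw [if_neg (by omega), if_neg (by omega)]
      exact hcne i hi
    · simpa [hcr] using hβγ

lemma inner_eq_zero_of_mem_parabolicOrbit {S' : Finset E} {C : Set E} {δ v : E}
    (hC : ∀ β ∈ C, ∀ α ∈ S', ⟪β, α⟫ ≠ 0 → α ∈ C) (hδ : ∀ β ∈ C, ⟪δ, β⟫ = 0)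
    (hv : v ∈ parabolicOrbit S' δ) : ∀ β ∈ C, ⟪v, β⟫ = 0 := by
  obtain ⟨l, hl, rfl⟩ := hv
  induction l with
  | nil => exact hδ
  | cons α l ih =>
    intro β hβ
    have ihl := ih fun x hx ↦ hl x (List.mem_cons_of_mem α hx)
    have hα : α ∈ S' := hl α List.mem_cons_self
    simp only [List.foldr_cons, sRefl, inner_sub_left, real_inner_smul_left, ihl β hβ]
    by_cases hαC : α ∈ C
    · simp [ihl α hαC]
    · have hαβ : ⟪α, β⟫ = 0 := by
        by_contra h
        exact hαC (hC β hβ α hα (by rwa [real_inner_comm]))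
      simp [hαβ]

lemma inner_eq_zero_of_mem_convexHull_parabolicOrbit {S' : Finset E} {C : Set E} {δ x : E}
    (hC : ∀ β ∈ C, ∀ α ∈ S', ⟪β, α⟫ ≠ 0 → α ∈ C) (hδ : ∀ β ∈ C, ⟪δ, β⟫ = 0)
    (hx : x ∈ convexHull ℝ (parabolicOrbit S' δ)) {β : E} (hβ : β ∈ C) : ⟪x, β⟫ = 0 := by
  have hsub : parabolicOrbit S' δ ⊆ (ℝ ∙ β)ᗮ := fun v hv ↦
    Submodule.mem_orthogonal_singleton_iff_inner_left.mpr
      (inner_eq_zero_of_mem_parabolicOrbit hC hδ hv β hβ)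
  exact Submodule.mem_orthogonal_singleton_iff_inner_left.mp
    (convexHull_min hsub (Submodule.convex _) hx)

lemma sum_smul_eq_zero_of_inner_eq_zero {C : Finset E} (c : E → ℝ)
    (h : ∀ β ∈ C, ⟪∑ α ∈ C, c α • α, β⟫ = 0) : ∑ α ∈ C, c α • α = 0 := by
  refine (inner_self_eq_zero (𝕜 := ℝ)).mp ?_
  rw [inner_sum]
  exact Finset.sum_eq_zero fun β hβ ↦ by rw [real_inner_smul_right, h β hβ, mul_zero]

theorem deltaAdmissible_of_mem_convexHull {S' : Finset E} {δ γ : E}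
    (hli : LinearIndepOn ℝ id (S' : Set E)) (hγ : γ ∈ convexHull ℝ (parabolicOrbit S' δ))
    {k : E → ℕ} (hdec : δ - γ = ∑ α ∈ S', (k α : ℝ) • α) (hkpos : ∀ α ∈ S', 0 < k α) :
    DeltaAdmissible S' δ := by
  classical
  intro a ha
  by_contra hna
  set C := S'.filter (LinkedIn S' a)
  have hC : ∀ β ∈ (C : Set E), ∀ α ∈ S', ⟪β, α⟫ ≠ 0 → α ∈ (C : Set E) := fun β hβ α hα hβα ↦
    Finset.mem_filter.mpr ⟨hα, (Finset.mem_filter.mp hβ).2.snoc hα hβα⟩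
  have hδC : ∀ β ∈ (C : Set E), ⟪δ, β⟫ = 0 := by
    intro β hβ
    by_contra hδβ
    obtain ⟨r, c, hc0, hcS, hcne, hcr⟩ := (Finset.mem_filter.mp hβ).2
    exact hna ⟨r, c, hc0, hcS, hcne, by rwa [hcr, real_inner_comm]⟩
  have hCS' : ∀ β ∈ C, ∀ α ∈ S', α ∉ C → ⟪α, β⟫ = 0 := fun β hβ α hα hαC ↦ by
    by_contra h
    exact hαC (hC β hβ α hα (by rwa [real_inner_comm]))
  have hsum : ∑ α ∈ C, (k α : ℝ) • α = 0 := by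
    refine sum_smul_eq_zero_of_inner_eq_zero _ fun β hβ ↦ ?_
    calc ⟪∑ α ∈ C, (k α : ℝ) • α, β⟫ = ∑ α ∈ C, (k α : ℝ) * ⟪α, β⟫ := by
          simp only [sum_inner, real_inner_smul_left]
      _ = ∑ α ∈ S', (k α : ℝ) * ⟪α, β⟫ :=
          Finset.sum_subset (Finset.filter_subset _ _) fun α hα hαC ↦ by
            rw [hCS' β hβ α hα hαC, mul_zero]
      _ = ⟪δ - γ, β⟫ := by simp only [hdec, sum_inner, real_inner_smul_left]
      _ = 0 := by
          rw [inner_sub_left, hδC β hβ,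
            inner_eq_zero_of_mem_convexHull_parabolicOrbit hC hδC hγ hβ, sub_zero]
  have hka := linearIndepOn_finset_iff.mp
    (hli.mono (Finset.coe_subset.mpr (Finset.filter_subset _ _))) _ hsum a
    (Finset.mem_filter.mpr ⟨ha, LinkedIn.refl ha⟩)
  exact (hkpos a ha).ne' (by exact_mod_cast hka)

theorem mem_dominant_face_of_positive_decomposition_general
    (d : ℕ)
    (Pδ S : Finset (EuclideanSpace ℝ (Fin d)))
    (K : EuclideanSpace ℝ (Fin d) → ℕ)
    (δ : EuclideanSpace ℝ (Fin d))
    (hli : LinearIndependent ℝ (Subtype.val : {x // x ∈ S} → EuclideanSpace ℝ (Fin d)))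
    -- `Π_δ` is invariant under the simple reflections, with invariant multiplicities
    (hrefl : ∀ α ∈ S, ∀ γ' ∈ Pδ, sRefl α γ' ∈ Pδ ∧ K (sRefl α γ') = K γ')
    -- every weight is dominated by `δ`:  `δ − γ' ∈ Q⁺`
    (hQ : ∀ γ' ∈ Pδ, ∃ m : EuclideanSpace ℝ (Fin d) → ℕ,
      δ - γ' = ∑ α ∈ S, (m α : ℝ) • α)
    -- every weight is connected to the highest weight `δ` by a chain of simple roots
    (hchain : ∀ γ' ∈ Pδ, ∃ (r : ℕ) (c : ℕ → EuclideanSpace ℝ (Fin d)),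
      c 0 = γ' ∧ c r = δ ∧ (∀ i ≤ r, c i ∈ Pδ) ∧ ∀ i < r, c (i + 1) - c i ∈ S)
    (γ : EuclideanSpace ℝ (Fin d)) (hγ : γ ∈ Pδ)
    (S' : Finset (EuclideanSpace ℝ (Fin d))) (hS' : S' ⊆ S)
    (k : EuclideanSpace ℝ (Fin d) → ℕ)
    (hdec : δ - γ = ∑ α ∈ S', (k α : ℝ) • α)
    (hkpos : ∀ α ∈ S', 0 < k α) :
    DeltaAdmissible S' δ ∧ γ ∈ convexHull ℝ (parabolicOrbit S' δ) := by
  have hliS : LinearIndepOn ℝ id (S : Set (EuclideanSpace ℝ (Fin d))) := hli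
  have hhull : γ ∈ convexHull ℝ (parabolicOrbit S' δ) :=
    mem_convexHull_parabolicOrbit hliS hS' (fun α hα γ' hγ' ↦ (hrefl α hα γ' hγ').1) hQ
      (fun _ hγ' ↦ exists_add_mem_of_chain hchain hγ') hγ hdec
  exact ⟨deltaAdmissible_of_mem_convexHull (hliS.mono (Finset.coe_subset.mpr hS')) hhull hdec
    hkpos, hhull⟩

/-- If `γ ∈ Π_δ` satisfies `δ − γ = Σ_{α ∈ S'} k_α α` with all
`k_α > 0`, then `S'` is `δ`-admissible and `γ` lies in the dominant face
`F_{S'} = Conv(W_{S'}·δ)` of the weight polytope `K(δ)`. -/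
theorem mem_dominant_face_of_positive_decomposition
    (d : ℕ)
    (Pδ S : Finset (EuclideanSpace ℝ (Fin d)))
    (K : EuclideanSpace ℝ (Fin d) → ℕ)
    (δ : EuclideanSpace ℝ (Fin d))
    (hδ : δ ∈ Pδ)
    (hKpos : ∀ γ ∈ Pδ, 0 < K γ)
    (hdom : ∀ α ∈ S, 0 ≤ ⟪δ, α⟫)
    (hli : LinearIndependent ℝ (Subtype.val : {x // x ∈ S} → EuclideanSpace ℝ (Fin d)))
    -- `Π_δ` is invariant under the simple reflections, with invariant multiplicities
    (hrefl : ∀ α ∈ S, ∀ γ' ∈ Pδ, sRefl α γ' ∈ Pδ ∧ K (sRefl α γ') = K γ')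
    -- every weight is dominated by `δ`:  `δ − γ' ∈ Q⁺`
    (hQ : ∀ γ' ∈ Pδ, ∃ m : EuclideanSpace ℝ (Fin d) → ℕ,
      δ - γ' = ∑ α ∈ S, (m α : ℝ) • α)
    -- every weight is connected to the highest weight `δ` by a chain of simple roots
    (hchain : ∀ γ' ∈ Pδ, ∃ (r : ℕ) (c : ℕ → EuclideanSpace ℝ (Fin d)),
      c 0 = γ' ∧ c r = δ ∧ (∀ i ≤ r, c i ∈ Pδ) ∧ ∀ i < r, c (i + 1) - c i ∈ S)
    (γ : EuclideanSpace ℝ (Fin d)) (hγ : γ ∈ Pδ)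
    (S' : Finset (EuclideanSpace ℝ (Fin d))) (hS' : S' ⊆ S)
    (k : EuclideanSpace ℝ (Fin d) → ℕ)
    (hdec : δ - γ = ∑ α ∈ S', (k α : ℝ) • α)
    (hkpos : ∀ α ∈ S', 0 < k α) :
    DeltaAdmissible S' δ ∧ γ ∈ convexHull ℝ (parabolicOrbit S' δ) :=
  mem_dominant_face_of_positive_decomposition_general d Pδ S K δ hli hrefl hQ hchain γ hγ S' hS' k
    hdec hkpos
end

section
/- With notation as in the previous statement, suppose t, τ ∈ [0,1]^d are such that S_{λ,nδ}(t)/S_δ(t)^n = S_{λ,nδ}(τ)/S_δ(τ)^n for all (λ,n) ∈ T̂_δ^+, where S_δ(t) = Σ_{γ∈Π_δ} K_{δ,γ} t^{δ−γ}. Then S_δ(t) = S_δ(τ). -/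
open Filter

lemma aux_le_of_pow_le (C : ℝ) (e : ℕ) (a b : ℝ) (ha : 0 < a) (hb : 0 < b)
    (h : ∀ n : ℕ, 1 ≤ n → a ^ n ≤ C * (n + 1) ^ e * b ^ n) : a ≤ b := by
  by_contra hlt
  push_neg at hlt
  set r := b / a with hr
  have hr0 : 0 < r := div_pos hb ha
  have hr1 : r < 1 := (div_lt_one ha).2 hlt
  have H : Tendsto (fun n : ℕ => (n : ℝ) ^ e * r ^ n) atTop (nhds 0) :=
    tendsto_pow_const_mul_const_pow_of_lt_one e hr0.le hr1
  have H1 : Tendsto (fun n : ℕ => ((n + 1 : ℕ) : ℝ) ^ e * r ^ (n + 1)) atTop (nhds 0) :=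
    H.comp (tendsto_add_atTop_nat 1)
  have H2 : Tendsto (fun n : ℕ => (C / r) * (((n + 1 : ℕ) : ℝ) ^ e * r ^ (n + 1)))
      atTop (nhds 0) := by simpa using H1.const_mul (C / r)
  have H3 : ∀ᶠ n : ℕ in atTop, (C / r) * (((n + 1 : ℕ) : ℝ) ^ e * r ^ (n + 1)) < 1 :=
    H2.eventually (gt_mem_nhds one_pos)
  obtain ⟨n, hn1, hn2⟩ := (H3.and (eventually_ge_atTop 1)).exists
  have key : (1 : ℝ) ≤ C * (n + 1) ^ e * r ^ n := by
    have h1 := h n hn2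
    have : a ^ n ≤ C * (n + 1) ^ e * r ^ n * a ^ n := by
      have : r ^ n * a ^ n = b ^ n := by
        rw [← mul_pow, hr, div_mul_cancel₀ _ (ne_of_gt ha)]
      rw [mul_assoc, this]; exact h1
    have hapos : 0 < a ^ n := pow_pos ha n
    nlinarith
  have calc1 : (C / r) * (((n + 1 : ℕ) : ℝ) ^ e * r ^ (n + 1)) =
      C * (n + 1) ^ e * r ^ n := by
    push_cast
    field_simp
    ring
  rw [calc1] at hn1
  linarith

lemma aux_sum_ge_one {d : ℕ} (t : Fin d → ℝ) (ht : ∀ i, 0 ≤ t i)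
    (B : Finset (Fin d → ℕ)) (Kb : (Fin d → ℕ) → ℕ)
    (h0 : 0 ∈ B) (hKb : ∀ β ∈ B, 1 ≤ Kb β) :
    (1 : ℝ) ≤ ∑ β ∈ B, (Kb β : ℝ) * ∏ i, t i ^ β i := by
  have hterm : (1 : ℝ) ≤ (Kb 0 : ℝ) * ∏ i, t i ^ (0 : Fin d → ℕ) i := by
    have : ∏ i, t i ^ (0 : Fin d → ℕ) i = 1 := by
      simp [Pi.zero_apply]
    rw [this, mul_one]
    exact_mod_cast hKb 0 h0
  refine le_trans hterm (Finset.single_le_sum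
    (f := fun β => (Kb β : ℝ) * ∏ i, t i ^ β i) (fun β _ => ?_) h0)
  exact mul_nonneg (Nat.cast_nonneg _) (Finset.prod_nonneg fun i _ => pow_nonneg (ht i) _)

lemma aux_sum_le {d : ℕ} (t : Fin d → ℝ) (ht : ∀ i, t i ∈ Set.Icc (0:ℝ) 1)
    (B : Finset (Fin d → ℕ)) (Kb : (Fin d → ℕ) → ℕ) :
    (∑ β ∈ B, (Kb β : ℝ) * ∏ i, t i ^ β i) ≤ ∑ β ∈ B, (Kb β : ℝ) := by
  refine Finset.sum_le_sum fun β _ => ?_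
  have hp : ∏ i, t i ^ β i ≤ 1 := by
    apply Finset.prod_le_one
    · intro i _; exact pow_nonneg (ht i).1 _
    · intro i _; exact pow_le_one₀ (ht i).1 (ht i).2
  have hnn : (0:ℝ) ≤ ∏ i, t i ^ β i :=
    Finset.prod_nonneg fun i _ => pow_nonneg (ht i).1 _
  nlinarith [show (0:ℝ) ≤ (Kb β : ℝ) from Nat.cast_nonneg _]



/-- In root coordinates, let `Aδ, Kδ` describe the weights `δ − γ` of
`V(δ)` with multiplicities, and for each `n ≥ 1` let `A n, K n` describe the weights
`nδ − γ` of `V(nδ)` with multiplicities (so `(nδ, n) ∈ T̂_δ⁺`), with `dim V(nδ)` growing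
at most polynomially in `n`.  If `t, τ ∈ [0,1]^d` satisfy
`S_{λ,nδ}(t)/S_δ(t)ⁿ = S_{λ,nδ}(τ)/S_δ(τ)ⁿ` for the elements `(λ, n) = (nδ, n)` of
`T̂_δ⁺`, then `S_δ(t) = S_δ(τ)`. -/
theorem S_delta_eq_of_ratio_eq
    (d : ℕ) (t τ : Fin d → ℝ)
    (ht : ∀ i, t i ∈ Set.Icc (0 : ℝ) 1) (hτ : ∀ i, τ i ∈ Set.Icc (0 : ℝ) 1)
    (Aδ : Finset (Fin d → ℕ)) (Kδ : (Fin d → ℕ) → ℕ)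
    (hδ0 : 0 ∈ Aδ) (hKδ : ∀ β ∈ Aδ, 1 ≤ Kδ β)
    (A : ℕ → Finset (Fin d → ℕ)) (K : ℕ → (Fin d → ℕ) → ℕ)
    (h0 : ∀ n, 0 ∈ A n) (hK : ∀ n, ∀ β ∈ A n, 1 ≤ K n β)
    -- by the Weyl dimension formula, `dim V(nδ)` grows polynomially in `n`
    (C : ℝ) (e : ℕ)
    (hdim : ∀ n : ℕ, (∑ β ∈ A n, (K n β : ℝ)) ≤ C * (n + 1) ^ e)
    (heq : ∀ n : ℕ, 1 ≤ n →
      (∑ β ∈ A n, (K n β : ℝ) * ∏ i, t i ^ β i) /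
          (∑ β ∈ Aδ, (Kδ β : ℝ) * ∏ i, t i ^ β i) ^ n =
        (∑ β ∈ A n, (K n β : ℝ) * ∏ i, τ i ^ β i) /
          (∑ β ∈ Aδ, (Kδ β : ℝ) * ∏ i, τ i ^ β i) ^ n) :
    (∑ β ∈ Aδ, (Kδ β : ℝ) * ∏ i, t i ^ β i) =
      (∑ β ∈ Aδ, (Kδ β : ℝ) * ∏ i, τ i ^ β i) := by
  set St := ∑ β ∈ Aδ, (Kδ β : ℝ) * ∏ i, t i ^ β i with hSt
  set Sτ := ∑ β ∈ Aδ, (Kδ β : ℝ) * ∏ i, τ i ^ β i with hSτ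
  have hSt1 : (1 : ℝ) ≤ St := aux_sum_ge_one t (fun i => (ht i).1) Aδ Kδ hδ0 hKδ
  have hSτ1 : (1 : ℝ) ≤ Sτ := aux_sum_ge_one τ (fun i => (hτ i).1) Aδ Kδ hδ0 hKδ
  have hSt0 : (0 : ℝ) < St := lt_of_lt_of_le one_pos hSt1
  have hSτ0 : (0 : ℝ) < Sτ := lt_of_lt_of_le one_pos hSτ1
  have cross : ∀ n : ℕ, 1 ≤ n →
      (∑ β ∈ A n, (K n β : ℝ) * ∏ i, t i ^ β i) * Sτ ^ n =
        (∑ β ∈ A n, (K n β : ℝ) * ∏ i, τ i ^ β i) * St ^ n := by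
    intro n hn
    have h1 := heq n hn
    rw [div_eq_div_iff (pow_pos hSt0 n).ne' (pow_pos hSτ0 n).ne'] at h1
    exact h1
  have bound : ∀ (σ : Fin d → ℝ), (∀ i, σ i ∈ Set.Icc (0:ℝ) 1) → ∀ n : ℕ,
      (∑ β ∈ A n, (K n β : ℝ) * ∏ i, σ i ^ β i) ≤ C * (n + 1) ^ e := by
    intro σ hσ n
    exact le_trans (aux_sum_le σ hσ (A n) (K n)) (hdim n)
  have lower : ∀ (σ : Fin d → ℝ), (∀ i, 0 ≤ σ i) → ∀ n : ℕ,
      (1 : ℝ) ≤ ∑ β ∈ A n, (K n β : ℝ) * ∏ i, σ i ^ β i := by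
    intro σ hσ n
    exact aux_sum_ge_one σ hσ (A n) (K n) (h0 n) (hK n)
  have h1 : St ≤ Sτ := by
    refine aux_le_of_pow_le C e St Sτ hSt0 hSτ0 fun n hn => ?_
    have hc := cross n hn
    have hl := lower τ (fun i => (hτ i).1) n
    have hb := bound t ht n
    nlinarith [pow_pos hSt0 n, pow_pos hSτ0 n]
  have h2 : Sτ ≤ St := by
    refine aux_le_of_pow_le C e Sτ St hSτ0 hSt0 fun n hn => ?_
    have hc := cross n hn
    have hl := lower t (fun i => (ht i).1) n
    have hb := bound τ hτ n
    nlinarith [pow_pos hSt0 n, pow_pos hSτ0 n]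
  linarith
end

section
/- Let B be a unital commutative ℝ-algebra and K ⊂ B a convex cone with: K − K = B; K·K ⊂ K; K is spanned by a countable set; and for all a ∈ B there exists ε > 0 with 1 − εa ∈ K. Let L be the convex set of linear forms φ : B → ℝ that are nonnegative on K and satisfy φ(1) = 1. Then φ is an extreme point of L if and only if φ is multiplicative, i.e., φ(ab) = φ(a)φ(b) for all a,b ∈ B. -/
/-!
Extreme implies multiplicative: for `u` with `u, 1 - u ∈ K`, the decomposition
`φ = φ (u * ·) + φ ((1 - u) * ·)` writes `φ` as a sum of two positive functionals, so extremality
forces `φ (u * ·) = φ u • φ`. Every element of `K` is such a `u` up to a positive factor, and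
`K - K = B`.

Multiplicative implies extreme: if `φ = a • ψ + b • ψ'`, then `ψ ≤ a⁻¹ φ` on `K`. For `v` with
`v, 1 - v ∈ K`, Bernstein polynomials put `(v - μ) ^ 2 + v (1 - v) / n` in `K` for every real `μ`.
Evaluating `ψ` there at `μ = ψ v` and at `μ = φ v`, where `φ` is `O(1 / n)` by multiplicativity,
gives `(ψ v - φ v) ^ 2 = O(1 / n)`, hence `ψ = φ`.
-/

open Polynomial Finset Set

theorem bernsteinPolynomial.sum_sq_smul (n : ℕ) (hn : n ≠ 0) (μ : ℝ) :
    ∑ k ∈ range (n + 1), ((k : ℝ) / n - μ) ^ 2 • bernsteinPolynomial ℝ n k =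
      (X - C μ) ^ 2 + C (n : ℝ)⁻¹ * (X * (1 - X)) := by
  refine Polynomial.funext fun x => ?_
  have h0 := congrArg (eval x) (bernsteinPolynomial.sum ℝ n)
  have h1 := congrArg (eval x) (bernsteinPolynomial.sum_smul ℝ n)
  have h2 := congrArg (eval x) (bernsteinPolynomial.sum_mul_smul ℝ n)
  simp only [eval_finsetSum, eval_smul, smul_eq_mul, nsmul_eq_mul, eval_add, eval_mul,
    eval_natCast, eval_one, eval_X, eval_C, eval_pow, eval_sub] at h0 h1 h2 ⊢
  have hn' : (n : ℝ) ≠ 0 := Nat.cast_ne_zero.2 hn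
  have expand (k : ℕ) (β : ℝ) : ((k : ℝ) / n - μ) ^ 2 * β =
      (n : ℝ)⁻¹ ^ 2 * (↑(k * (k - 1)) * β) + ((n : ℝ)⁻¹ ^ 2 - 2 * μ / n) * (k * β) +
        μ ^ 2 * β := by
    rcases k with _ | k
    · simp
    · push_cast [Nat.add_sub_cancel]
      field_simp
      ring
  simp only [expand, sum_add_distrib, ← mul_sum]
  rw [h0, h1, h2, Nat.cast_mul, Nat.cast_pred (Nat.pos_of_ne_zero hn)]
  field_simp
  ring

namespace KerovVershik

section Module

variable {M : Type*} [AddCommGroup M] [Module ℝ M]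

def IsGenerating (K : Set M) : Prop := ∀ b : M, ∃ x ∈ K, ∃ y ∈ K, b = x - y

def IsOrderUnit (K : Set M) (e : M) : Prop := ∀ a : M, ∃ ε : ℝ, 0 < ε ∧ e - ε • a ∈ K

def IsPositive (K : Set M) (χ : M →ₗ[ℝ] ℝ) : Prop := ∀ x ∈ K, 0 ≤ χ x

variable {K : Set M}

theorem IsOrderUnit.mem {e : M} (h : IsOrderUnit K e) : e ∈ K := by
  obtain ⟨ε, -, he⟩ := h 0
  simpa using he

theorem IsGenerating.linearMap_ext {N : Type*} [AddCommGroup N] [Module ℝ N]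
    (hgen : IsGenerating K) {f g : M →ₗ[ℝ] N} (hfg : EqOn f g K) : f = g := by
  ext b
  obtain ⟨x, hx, y, hy, rfl⟩ := hgen b
  rw [map_sub, map_sub, hfg hx, hfg hy]

theorem IsGenerating.linearMap_ext_of_orderInterval {N : Type*} [AddCommGroup N] [Module ℝ N]
    (hsmul : ∀ c : ℝ, 0 ≤ c → ∀ x ∈ K, c • x ∈ K) (hgen : IsGenerating K) {e : M}
    (harch : IsOrderUnit K e) {f g : M →ₗ[ℝ] N} (hfg : ∀ u ∈ K, e - u ∈ K → f u = g u) :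
    f = g := by
  refine hgen.linearMap_ext fun x hx => ?_
  obtain ⟨ε, hε, hεx⟩ := harch x
  have hεfg := hfg (ε • x) (hsmul ε hε.le x hx) hεx
  rw [map_smul, map_smul] at hεfg
  exact smul_right_injective N hε.ne' hεfg

theorem IsPositive.eq_zero (hgen : IsGenerating K) {e : M} (harch : IsOrderUnit K e)
    {χ : M →ₗ[ℝ] ℝ} (hχ : IsPositive K χ) (he : χ e = 0) : χ = 0 := by
  refine hgen.linearMap_ext fun x hx => ?_
  obtain ⟨ε, hε, hεx⟩ := harch x
  have hεχ : 0 ≤ χ (e - ε • x) := hχ _ hεx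
  rw [map_sub, map_smul, he, smul_eq_mul, zero_sub, neg_nonneg] at hεχ
  exact le_antisymm (nonpos_of_mul_nonpos_right hεχ hε) (hχ x hx)

end Module

variable {B : Type*} [CommRing B] [Algebra ℝ B]

structure IsSemiringCone (K : Set B) : Prop where
  one_mem : (1 : B) ∈ K
  add_mem : ∀ x ∈ K, ∀ y ∈ K, x + y ∈ K
  mul_mem : ∀ x ∈ K, ∀ y ∈ K, x * y ∈ K
  smul_mem : ∀ c : ℝ, 0 ≤ c → ∀ x ∈ K, c • x ∈ K

def states (K : Set B) : Set (B →ₗ[ℝ] ℝ) := {ψ | IsPositive K ψ ∧ ψ 1 = 1}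

variable {K : Set B}

def IsSemiringCone.toSubsemiring (hK : IsSemiringCone K) : Subsemiring B where
  carrier := K
  one_mem' := hK.one_mem
  mul_mem' ha hb := hK.mul_mem _ ha _ hb
  zero_mem' := by simpa using hK.smul_mem 0 le_rfl 1 hK.one_mem
  add_mem' ha hb := hK.add_mem _ ha _ hb

theorem IsSemiringCone.aeval_bernsteinPolynomial_mem (hK : IsSemiringCone K) {v : B}
    (hv : v ∈ K) (hv' : 1 - v ∈ K) (n k : ℕ) : aeval v (bernsteinPolynomial ℝ n k) ∈ K := by
  let S := hK.toSubsemiring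
  change v ∈ S at hv
  change 1 - v ∈ S at hv'
  simp only [bernsteinPolynomial, map_mul, map_pow, map_sub, map_one, map_natCast, aeval_X]
  exact S.mul_mem (S.mul_mem (natCast_mem S _) (S.pow_mem hv _)) (S.pow_mem hv' _)

theorem IsSemiringCone.sq_sub_add_smul_mem (hK : IsSemiringCone K) {v : B}
    (hv : v ∈ K) (hv' : 1 - v ∈ K) {n : ℕ} (hn : n ≠ 0) (μ : ℝ) :
    (v - algebraMap ℝ B μ) ^ 2 + (n : ℝ)⁻¹ • (v * (1 - v)) ∈ K := by
  have := congrArg (aeval v) (bernsteinPolynomial.sum_sq_smul n hn μ)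
  simp only [map_sum, map_smul, map_add, map_mul, map_pow, map_sub, aeval_X, aeval_C,
    map_one] at this
  rw [Algebra.smul_def, ← this]
  exact hK.toSubsemiring.sum_mem fun k _ =>
    hK.smul_mem _ (sq_nonneg _) _ (hK.aeval_bernsteinPolynomial_mem hv hv' n k)

theorem IsPositive.inv_smul_mem_states {χ : B →ₗ[ℝ] ℝ} (hχ : IsPositive K χ) (h : 0 < χ 1) :
    (χ 1)⁻¹ • χ ∈ states K :=
  ⟨fun x hx => mul_nonneg (inv_nonneg.2 h.le) (hχ x hx), inv_mul_cancel₀ h.ne'⟩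

theorem eq_smul_of_mem_extremePoints (hgen : IsGenerating K) (harch : IsOrderUnit K 1)
    {φ χ : B →ₗ[ℝ] ℝ} (hφ : φ ∈ (states K).extremePoints ℝ) (hχ : IsPositive K χ)
    (hφχ : IsPositive K (φ - χ)) : χ = χ 1 • φ := by
  obtain ⟨⟨-, hφ1⟩, hext⟩ := hφ
  have hχ0 : 0 ≤ χ 1 := hχ 1 harch.mem
  have hχ1 : χ 1 ≤ 1 := by simpa [hφ1] using hφχ 1 harch.mem
  rcases hχ0.eq_or_lt with hχ0 | hχ0
  · rw [← hχ0, zero_smul]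
    exact hχ.eq_zero hgen harch hχ0.symm
  rcases hχ1.eq_or_lt with hχ1 | hχ1
  · have hφχ0 : φ - χ = 0 := hφχ.eq_zero hgen harch (by simp [hφ1, hχ1])
    rw [hχ1, one_smul, ← sub_eq_zero, ← neg_sub, hφχ0, neg_zero]
  have hφχ1 : (φ - χ) 1 = 1 - χ 1 := by simp [hφ1]
  have hseg : φ ∈ openSegment ℝ ((χ 1)⁻¹ • χ) (((φ - χ) 1)⁻¹ • (φ - χ)) := by
    refine ⟨χ 1, 1 - χ 1, hχ0, sub_pos.2 hχ1, add_sub_cancel _ _, ?_⟩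
    rw [hφχ1, smul_smul, smul_smul, mul_inv_cancel₀ hχ0.ne', mul_inv_cancel₀ (sub_pos.2 hχ1).ne',
      one_smul, one_smul, add_sub_cancel]
  have hχφ := hext (hχ.inv_smul_mem_states hχ0) (hφχ.inv_smul_mem_states (by linarith)) hseg
  rw [← hχφ, smul_smul, mul_inv_cancel₀ hχ0.ne', one_smul]

theorem map_mul_of_mem_extremePoints (hK : IsSemiringCone K) (hgen : IsGenerating K)
    (harch : IsOrderUnit K 1) {φ : B →ₗ[ℝ] ℝ} (hφ : φ ∈ (states K).extremePoints ℝ) (a b : B) :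
    φ (a * b) = φ a * φ b := by
  suffices φ ∘ₗ LinearMap.mulRight ℝ b = φ b • φ by
    simpa [mul_comm] using LinearMap.congr_fun this a
  refine hgen.linearMap_ext_of_orderInterval hK.smul_mem harch fun u hu hu' => ?_
  have hφu := eq_smul_of_mem_extremePoints hgen harch hφ (χ := φ ∘ₗ LinearMap.mulLeft ℝ u)
    (fun x hx => hφ.1.1 _ (hK.mul_mem u hu x hx))
    (fun x hx => by simpa [sub_mul] using hφ.1.1 _ (hK.mul_mem _ hu' x hx))
  simpa [mul_comm] using LinearMap.congr_fun hφu b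

theorem eq_of_map_mul_of_le_mul (hK : IsSemiringCone K) (hgen : IsGenerating K)
    (harch : IsOrderUnit K 1) {φ ψ : B →ₗ[ℝ] ℝ} (hφ1 : φ 1 = 1)
    (hmul : ∀ a b : B, φ (a * b) = φ a * φ b) (hψ : ψ ∈ states K) {C : ℝ}
    (hdom : ∀ x ∈ K, ψ x ≤ C * φ x) : ψ = φ := by
  refine hgen.linearMap_ext_of_orderInterval hK.smul_mem harch fun v hv hv' => ?_
  have hQ (χ : B →ₗ[ℝ] ℝ) (hχ1 : χ 1 = 1) (n : ℕ) (μ : ℝ) :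
      χ ((v - algebraMap ℝ B μ) ^ 2 + (n : ℝ)⁻¹ • (v * (1 - v))) =
        χ (v ^ 2) - 2 * μ * χ v + μ ^ 2 + (n : ℝ)⁻¹ * χ (v * (1 - v)) := by
    have : (v - algebraMap ℝ B μ) ^ 2 = v ^ 2 - (2 * μ) • v + μ ^ 2 • 1 := by
      simp only [Algebra.smul_def, map_mul, map_pow, map_ofNat, mul_one]
      ring
    simp only [this, map_add, map_sub, map_smul, smul_eq_mul, hχ1]
    ring
  have hφsq : φ (v ^ 2) = φ v ^ 2 := by rw [pow_two, hmul, pow_two]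
  have hφv : φ (v * (1 - v)) = φ v * (1 - φ v) := by rw [hmul, map_sub, hφ1]
  have hbound : ∀ᶠ n : ℕ in Filter.atTop, (ψ v - φ v) ^ 2 ≤ C * (φ v * (1 - φ v)) / n := by
    filter_upwards [Filter.eventually_ne_atTop 0] with n hn
    have h1 := hψ.1 _ (hK.sq_sub_add_smul_mem hv hv' hn (ψ v))
    have h2 := hdom _ (hK.sq_sub_add_smul_mem hv hv' hn (φ v))
    rw [hQ ψ hψ.2] at h1
    rw [hQ ψ hψ.2, hQ φ hφ1, hφsq, hφv] at h2
    rw [div_eq_mul_inv]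
    linarith
  have hsq := ge_of_tendsto (tendsto_const_div_atTop_nhds_zero_nat _) hbound
  exact sub_eq_zero.mp (pow_eq_zero_iff two_ne_zero |>.mp (le_antisymm hsq (sq_nonneg _)))

theorem mem_extremePoints_of_map_mul (hK : IsSemiringCone K) (hgen : IsGenerating K)
    (harch : IsOrderUnit K 1) {φ : B →ₗ[ℝ] ℝ} (hφ : φ ∈ states K)
    (hmul : ∀ a b : B, φ (a * b) = φ a * φ b) : φ ∈ (states K).extremePoints ℝ := by
  refine ⟨hφ, fun ψ hψ ψ' hψ' ⟨a, b, ha, hb, _, hφab⟩ => ?_⟩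
  refine eq_of_map_mul_of_le_mul hK hgen harch hφ.2 hmul hψ (C := a⁻¹) fun x hx => ?_
  rw [← hφab, LinearMap.add_apply, LinearMap.smul_apply, LinearMap.smul_apply, smul_eq_mul,
    smul_eq_mul, mul_add, inv_mul_cancel_left₀ ha.ne']
  exact le_add_of_nonneg_right (mul_nonneg (inv_nonneg.2 ha.le) (mul_nonneg hb.le (hψ'.1 x hx)))

end KerovVershik

theorem ring_theorem_extreme_iff_multiplicative_general
    (B : Type*) [CommRing B] [Algebra ℝ B]
    (K : Set B)
    -- `K` is a convex cone
    (hKsmul : ∀ c : ℝ, 0 ≤ c → ∀ x ∈ K, c • x ∈ K)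
    (hKadd : ∀ x ∈ K, ∀ y ∈ K, x + y ∈ K)
    -- `K − K = B`
    (hgen : ∀ b : B, ∃ x ∈ K, ∃ y ∈ K, b = x - y)
    -- `K · K ⊆ K`
    (hKmul : ∀ x ∈ K, ∀ y ∈ K, x * y ∈ K)
    -- Archimedean-type condition
    (harch : ∀ a : B, ∃ ε : ℝ, 0 < ε ∧ 1 - ε • a ∈ K)
    (φ : B →ₗ[ℝ] ℝ)
    (hφ : φ ∈ {ψ : B →ₗ[ℝ] ℝ | (∀ x ∈ K, 0 ≤ ψ x) ∧ ψ 1 = 1}) :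
    φ ∈ Set.extremePoints ℝ {ψ : B →ₗ[ℝ] ℝ | (∀ x ∈ K, 0 ≤ ψ x) ∧ ψ 1 = 1} ↔
      ∀ a b : B, φ (a * b) = φ a * φ b := by
  have hK : KerovVershik.IsSemiringCone K :=
    ⟨KerovVershik.IsOrderUnit.mem harch, hKadd, hKmul, hKsmul⟩
  exact ⟨KerovVershik.map_mul_of_mem_extremePoints hK hgen harch,
    KerovVershik.mem_extremePoints_of_map_mul hK hgen harch hφ⟩

/-- **Ring Theorem of Kerov and Vershik.** Let `B` be a unital commutative
`ℝ`-algebra and `K ⊂ B` a convex cone with `K − K = B`, `K·K ⊂ K`, `K` spanned by a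
countable set, and such that for every `a ∈ B` there is `ε > 0` with `1 − εa ∈ K`.
Then a linear form `φ` in the convex set `L` of linear forms nonnegative on `K` with
`φ(1) = 1` is an extreme point of `L` if and only if it is multiplicative. -/
theorem ring_theorem_extreme_iff_multiplicative
    (B : Type*) [CommRing B] [Algebra ℝ B]
    (K : Set B)
    -- `K` is a convex cone
    (hKsmul : ∀ c : ℝ, 0 ≤ c → ∀ x ∈ K, c • x ∈ K)
    (hKadd : ∀ x ∈ K, ∀ y ∈ K, x + y ∈ K)
    -- `K − K = B`
    (hgen : ∀ b : B, ∃ x ∈ K, ∃ y ∈ K, b = x - y)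
    -- `K · K ⊆ K`
    (hKmul : ∀ x ∈ K, ∀ y ∈ K, x * y ∈ K)
    -- `K` is spanned by a countable set of elements
    (hcount : ∃ D : Set B, D.Countable ∧ D ⊆ K ∧
      ∀ x ∈ K, ∃ (s : Finset B) (c : B → ℝ), (↑s : Set B) ⊆ D ∧
        (∀ b, 0 ≤ c b) ∧ x = ∑ b ∈ s, c b • b)
    -- Archimedean-type condition
    (harch : ∀ a : B, ∃ ε : ℝ, 0 < ε ∧ 1 - ε • a ∈ K)
    (φ : B →ₗ[ℝ] ℝ)
    (hφ : φ ∈ {ψ : B →ₗ[ℝ] ℝ | (∀ x ∈ K, 0 ≤ ψ x) ∧ ψ 1 = 1}) :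
    φ ∈ Set.extremePoints ℝ {ψ : B →ₗ[ℝ] ℝ | (∀ x ∈ K, 0 ≤ ψ x) ∧ ψ 1 = 1} ↔
      ∀ a b : B, φ (a * b) = φ a * φ b :=
  ring_theorem_extreme_iff_multiplicative_general B K hKsmul hKadd hgen hKmul harch φ hφ
end

section
/- Let f : T̂_δ → ℝ be an algebra morphism that is nonnegative on the generating set {(e^γ,1) : γ ∈ Π_δ} and satisfies f(s_δ,1)=1, and suppose its mean vector M_f = Σ_{γ∈Π_δ} K_{δ,γ} f(e^γ,1) γ lies in the dominant chamber Δ. Then there exists a multiplicative map φ : ℝ[Q^+] → ℝ^+ (determined by its nonnegative values φ(e^{α_i}) on the simple roots) such that f(e^γ, n) = φ(e^{nδ − γ}) / φ(S_δ)^n for all (e^γ, n) ∈ T̂_δ, where S_δ = Σ_{γ∈Π_δ} K_{δ,γ} e^{γ−δ} ∈ ℝ[Q^+]. -/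
open scoped RealInnerProductSpace

/-- Let `F` encode an algebra morphism `f : T̂_δ → ℝ` by its values
`F γ n = f(e^γ, n)` on the monomials (so `F` is multiplicative), nonnegative on the
generators `(e^γ, 1)`, `γ ∈ Π_δ`, normalized by `f(s_δ, 1) = 1`, and whose mean vector
lies in the dominant chamber.  Then there is a multiplicative map `φ : ℝ[Q⁺] → ℝ⁺`,
determined by nonnegative values `t i = φ(e^{α_i})` on the simple roots, such that
`f(e^γ, n) = φ(e^{nδ − γ}) / φ(S_δ)ⁿ` for all `(e^γ, n) ∈ T̂_δ` (here `q γ` records the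
root coordinates of `δ − γ`, so that `nδ − γ` for `γ = γ₁ + ⋯ + γ_n` has coordinates
`Σ_j q (γ_j)`, and `φ(S_δ) = Σ_γ K_γ t^{δ−γ}`). -/
theorem morphism_eq_monomial_over_Sdelta
    (d : ℕ)
    (α : Fin d → EuclideanSpace ℝ (Fin d))
    (hα : LinearIndependent ℝ α)
    (Pδ : Finset (EuclideanSpace ℝ (Fin d)))
    (K : EuclideanSpace ℝ (Fin d) → ℕ)
    (δ : EuclideanSpace ℝ (Fin d)) (hδ : δ ∈ Pδ)
    (hKpos : ∀ γ ∈ Pδ, 0 < K γ)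
    -- root coordinates: `δ - γ = Σ_i (q γ i) α i` for every weight `γ`
    (q : EuclideanSpace ℝ (Fin d) → Fin d → ℕ)
    (hq : ∀ γ ∈ Pδ, δ - γ = ∑ i, (q γ i : ℝ) • α i)
    -- background facts on the weight system
    (hrefl : ∀ i, ∀ γ ∈ Pδ,
      (γ - (2 * ⟪γ, α i⟫ / ⟪α i, α i⟫) • α i) ∈ Pδ ∧
      K (γ - (2 * ⟪γ, α i⟫ / ⟪α i, α i⟫) • α i) = K γ)
    (hstring : ∀ γ ∈ Pδ, ∀ i, 0 < ⟪γ, α i⟫ → γ - α i ∈ Pδ)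
    (hchain : ∀ γ ∈ Pδ, ∃ (r : ℕ) (c : ℕ → EuclideanSpace ℝ (Fin d)),
      c 0 = γ ∧ c r = δ ∧ (∀ j ≤ r, c j ∈ Pδ) ∧ ∀ j < r, ∃ i, c (j + 1) - c j = α i)
    -- the morphism `f`, given through its values on monomials
    (F : EuclideanSpace ℝ (Fin d) → ℕ → ℝ)
    (hFmul : ∀ (n m : ℕ) (xs : Fin n → EuclideanSpace ℝ (Fin d))
      (ys : Fin m → EuclideanSpace ℝ (Fin d)),
      (∀ j, xs j ∈ Pδ) → (∀ j, ys j ∈ Pδ) →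
      F ((∑ j, xs j) + ∑ j, ys j) (n + m) = F (∑ j, xs j) n * F (∑ j, ys j) m)
    (hFnn : ∀ γ ∈ Pδ, 0 ≤ F γ 1)
    (hFnorm : ∑ γ ∈ Pδ, (K γ : ℝ) * F γ 1 = 1)
    (hmean : ∀ i, 0 ≤ ⟪α i, ∑ γ ∈ Pδ, (K γ : ℝ) • F γ 1 • γ⟫) :
    ∃ t : Fin d → ℝ, (∀ i, 0 ≤ t i) ∧
      ∀ (n : ℕ) (γs : Fin n → EuclideanSpace ℝ (Fin d)), (∀ j, γs j ∈ Pδ) →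
        F (∑ j, γs j) n * (∑ γ ∈ Pδ, (K γ : ℝ) * ∏ i, t i ^ q γ i) ^ n =
          ∏ i, t i ^ (∑ j, q (γs j) i) := by
  classical
  -- cross relation
  have R2 : ∀ a b c e : EuclideanSpace ℝ (Fin d), a ∈ Pδ → b ∈ Pδ → c ∈ Pδ → e ∈ Pδ →
      a + b = c + e → F a 1 * F b 1 = F c 1 * F e 1 := by
    intro a b c e ha hb hc he habce
    have h1 := hFmul 1 1 (fun _ => a) (fun _ => b) (fun _ => ha) (fun _ => hb)
    have h2 := hFmul 1 1 (fun _ => c) (fun _ => e) (fun _ => hc) (fun _ => he)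
    simp only [Fin.sum_univ_one] at h1 h2
    rw [← h1, ← h2, habce]
  -- coordinates
  have coordEq : ∀ u v : Fin d → ℝ, ∑ i, u i • α i = ∑ i, v i • α i → ∀ i, u i = v i := by
    intro u v huv i
    have h0 : ∑ i, (u i - v i) • α i = 0 := by
      simp [sub_smul, Finset.sum_sub_distrib, huv]
    have := Fintype.linearIndependent_iff.mp hα _ h0 i
    linarith
  have hqδ : ∀ i, q δ i = 0 := by
    intro i
    have h := hq δ hδ
    rw [sub_self] at h
    have h2 : ∑ i, (q δ i : ℝ) • α i = ∑ i, (0:ℝ) • α i := by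
      rw [← h]; simp
    have := coordEq _ _ h2 i
    exact_mod_cast this
  -- upward closure of the support
  have uc : ∀ (i : Fin d) (γ : EuclideanSpace ℝ (Fin d)), γ ∈ Pδ → γ + α i ∈ Pδ →
      0 < F γ 1 → 0 < F (γ + α i) 1 := by
    intro i γ hγ hγa hpos
    by_contra hnot
    have h0 : F (γ + α i) 1 = 0 := le_antisymm (not_lt.mp hnot) (hFnn _ hγa)
    have htops : ∀ μ, μ ∈ Pδ → μ + α i ∈ Pδ → F (μ + α i) 1 = 0 := by
      intro μ hμ hμa
      have hr := R2 γ (μ + α i) (γ + α i) μ hγ hμa hγa hμ (by abel)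
      rw [h0, zero_mul] at hr
      rcases mul_eq_zero.mp hr with h | h
      · exact absurd h hpos.ne'
      · exact h
    have hnonpos : ∀ ν, ν ∈ Pδ → 0 < F ν 1 → ⟪ν, α i⟫ ≤ 0 := by
      intro ν hν hνpos
      by_contra hlt
      push_neg at hlt
      have hν' : ν - α i ∈ Pδ := hstring ν hν i hlt
      have hνid : ν - α i + α i = ν := by abel
      have := htops (ν - α i) hν' (by rw [hνid]; exact hν)
      rw [hνid] at this
      exact absurd this hνpos.ne'
    have hαi0 : ⟪α i, α i⟫ ≠ 0 := fun h => hα.ne_zero i (real_inner_self_nonpos.mp h.le)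
    have hstrict : ⟪γ, α i⟫ < 0 := by
      rcases lt_or_eq_of_le (hnonpos γ hγ hpos) with h | h
      · exact h
      · exfalso
        have hco : 2 * ⟪γ + α i, α i⟫ / ⟪α i, α i⟫ = 2 := by
          rw [inner_add_left, h, zero_add, mul_div_assoc, div_self hαi0, mul_one]
        have hmem := (hrefl i (γ + α i) hγa).1
        rw [hco] at hmem
        have hid : γ + α i - (2:ℝ) • α i = γ - α i := by rw [two_smul]; abel
        rw [hid] at hmem
        have hνid : γ - α i + α i = γ := by abel
        have := htops (γ - α i) hmem (by rw [hνid]; exact hγ)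
        rw [hνid] at this
        exact absurd this hpos.ne'
    have hmean' := hmean i
    rw [inner_sum] at hmean'
    simp only [real_inner_smul_right] at hmean'
    have hlt : ∑ ν ∈ Pδ, (K ν : ℝ) * (F ν 1 * ⟪α i, ν⟫) < ∑ ν ∈ Pδ, (0:ℝ) := by
      apply Finset.sum_lt_sum
      · intro ν hν
        rcases (hFnn ν hν).lt_or_eq with hp | hp
        · have h1 : ⟪α i, ν⟫ ≤ 0 := by rw [real_inner_comm]; exact hnonpos ν hν hp
          have h2 : (0:ℝ) ≤ (K ν : ℝ) := Nat.cast_nonneg _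
          have h3 : F ν 1 * ⟪α i, ν⟫ ≤ 0 := mul_nonpos_iff.mpr (Or.inl ⟨hp.le, h1⟩)
          exact mul_nonpos_iff.mpr (Or.inl ⟨h2, h3⟩)
        · rw [← hp]; simp
      · refine ⟨γ, hγ, ?_⟩
        have hK : (0:ℝ) < (K γ : ℝ) := by exact_mod_cast hKpos γ hγ
        have hip : ⟪α i, γ⟫ < 0 := by rw [real_inner_comm]; exact hstrict
        have : F γ 1 * ⟪α i, γ⟫ < 0 := mul_neg_of_pos_of_neg hpos hip
        exact mul_neg_of_pos_of_neg hK this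
    rw [Finset.sum_const, smul_zero] at hlt
    linarith
  -- existence of a positive weight
  have hex : ∃ γ ∈ Pδ, 0 < F γ 1 := by
    by_contra hno
    push_neg at hno
    have hz : ∑ γ ∈ Pδ, (K γ : ℝ) * F γ 1 = 0 := by
      apply Finset.sum_eq_zero
      intro γ hγ
      have : F γ 1 = 0 := le_antisymm (hno γ hγ) (hFnn γ hγ)
      rw [this, mul_zero]
    rw [hFnorm] at hz
    norm_num at hz
  obtain ⟨γ₀, hγ₀, hγ₀pos⟩ := hex
  -- positivity propagates along chains : F δ 1 > 0
  have hgδ : 0 < F δ 1 := by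
    obtain ⟨r, c, hc0, hcr, hcm, hstep⟩ := hchain γ₀ hγ₀
    have hup : ∀ j, j ≤ r → 0 < F (c j) 1 := by
      intro j
      induction j with
      | zero => intro _; rw [hc0]; exact hγ₀pos
      | succ j ih =>
        intro hj
        obtain ⟨i₀, hi₀⟩ := hstep j (by omega)
        have hsum : c (j + 1) = c j + α i₀ := by rw [← hi₀]; abel
        rw [hsum]
        exact uc i₀ (c j) (hcm j (by omega)) (hsum ▸ hcm (j + 1) (by omega)) (ih (by omega))
    have := hup r le_rfl
    rwa [hcr] at this
  -- the ratios t i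
  have htex : ∀ i : Fin d, ∃ v : ℝ, 0 ≤ v ∧
      ∀ γ, γ ∈ Pδ → γ + α i ∈ Pδ → F γ 1 = v * F (γ + α i) 1 := by
    intro i
    by_cases h : ∃ μ, μ ∈ Pδ ∧ μ + α i ∈ Pδ ∧ 0 < F (μ + α i) 1
    · obtain ⟨μ, hμ, hμa, hμpos⟩ := h
      refine ⟨F μ 1 / F (μ + α i) 1, div_nonneg (hFnn μ hμ) hμpos.le, ?_⟩
      intro γ hγ hγa
      have hr := R2 γ (μ + α i) (γ + α i) μ hγ hμa hγa hμ (by abel)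
      rw [div_mul_eq_mul_div, eq_div_iff hμpos.ne']
      linarith
    · push_neg at h
      refine ⟨0, le_rfl, ?_⟩
      intro γ hγ hγa
      have h1 : F (γ + α i) 1 = 0 := le_antisymm (h γ hγ hγa) (hFnn _ hγa)
      have h2 : F γ 1 = 0 := by
        by_contra h2
        have hpos : 0 < F γ 1 := (hFnn γ hγ).lt_of_ne (Ne.symm h2)
        have := uc i γ hγ hγa hpos
        rw [h1] at this
        exact lt_irrefl _ this
      rw [h1, h2, mul_zero]
  choose t ht0 htL1 using htex
  -- the key product formula along chains
  have key : ∀ γ ∈ Pδ, F γ 1 = F δ 1 * ∏ i, t i ^ q γ i := by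
    intro γ hγ
    obtain ⟨r, c, hc0, hcr, hcm, hstep⟩ := hchain γ hγ
    suffices h : ∀ m, m ≤ r → F (c (r - m)) 1 = F δ 1 * ∏ i, t i ^ q (c (r - m)) i by
      have := h r le_rfl
      rwa [Nat.sub_self, hc0] at this
    intro m
    induction m with
    | zero =>
      intro _
      simp only [Nat.sub_zero, hcr]
      simp [hqδ]
    | succ m ih =>
      intro hm
      obtain ⟨i₀, hi₀⟩ := hstep (r - (m + 1)) (by omega)
      have hjj : r - (m + 1) + 1 = r - m := by omega
      rw [hjj] at hi₀
      set j := r - (m + 1) with hj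
      have hsum : c (r - m) = c j + α i₀ := by rw [← hi₀]; abel
      have hcjP : c j ∈ Pδ := hcm j (by omega)
      have hcj1P : c (r - m) ∈ Pδ := hcm _ (by omega)
      have hqstep : ∀ k, q (c j) k = q (c (r - m)) k + (if k = i₀ then 1 else 0) := by
        intro k
        have h1 := hq _ hcjP
        have h2 := hq _ hcj1P
        have hEq : ∑ i, (q (c j) i : ℝ) • α i
            = ∑ i, ((q (c (r - m)) i : ℝ) + if i = i₀ then (1:ℝ) else 0) • α i := by
          have hrhs : ∑ i, ((q (c (r - m)) i : ℝ) + if i = i₀ then (1:ℝ) else 0) • α i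
              = (∑ i, (q (c (r - m)) i : ℝ) • α i) + α i₀ := by
            rw [Finset.sum_congr rfl (fun i _ => add_smul ((q (c (r - m)) i : ℝ)) _ (α i)),
              Finset.sum_add_distrib]
            congr 1
            simp [ite_smul]
          rw [hrhs, ← h1, ← h2, hsum]
          abel
        have := coordEq _ _ hEq k
        rcases Decidable.em (k = i₀) with hk | hk <;> simp [hk] at this ⊢ <;> exact_mod_cast this
      have hL1 : F (c j) 1 = t i₀ * F (c j + α i₀) 1 :=
        htL1 i₀ (c j) hcjP (hsum ▸ hcj1P)
      rw [← hsum] at hL1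
      have hih := ih (by omega)
      rw [hL1, hih]
      have hprod : ∏ i, t i ^ q (c j) i = (∏ i, t i ^ q (c (r - m)) i) * t i₀ := by
        rw [Finset.prod_congr rfl (fun k _ => by rw [hqstep k, pow_add]),
          Finset.prod_mul_distrib]
        congr 1
        simp [pow_ite]
      rw [hprod]
      ring
  -- first values: F 0 0 = 1
  have F00 : F 0 0 = 1 := by
    have h := hFmul 0 1 (fun x => x.elim0) (fun _ => δ) (fun j => j.elim0) (fun _ => hδ)
    simp only [Finset.univ_eq_empty, Finset.sum_empty, Fin.sum_univ_one, zero_add] at h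
    exact mul_right_cancel₀ hgδ.ne' (by rw [one_mul]; exact h.symm)
  -- products of values
  have Fprod : ∀ (n : ℕ) (γs : Fin n → EuclideanSpace ℝ (Fin d)), (∀ j, γs j ∈ Pδ) →
      F (∑ j, γs j) n = ∏ j, F (γs j) 1 := by
    intro n
    induction n with
    | zero =>
      intro γs _
      simp only [Finset.univ_eq_empty, Finset.sum_empty, Finset.prod_empty]
      exact F00
    | succ n ih =>
      intro γs hγs
      have h := hFmul n 1 (fun j => γs j.castSucc) (fun _ => γs (Fin.last n))
        (fun j => hγs _) (fun _ => hγs _)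
      simp only [Fin.sum_univ_one] at h
      rw [Fin.sum_univ_castSucc (f := γs), Fin.prod_univ_castSucc (f := fun j => F (γs j) 1)]
      rw [h, ih _ (fun j => hγs _)]
  -- normalization of S
  have hS : (∑ γ ∈ Pδ, (K γ : ℝ) * ∏ i, t i ^ q γ i) * F δ 1 = 1 := by
    rw [← hFnorm, Finset.sum_mul]
    apply Finset.sum_congr rfl
    intro γ hγ
    rw [key γ hγ]
    ring
  refine ⟨t, ht0, ?_⟩
  intro n γs hγs
  rw [Fprod n γs hγs]
  rw [Finset.prod_congr rfl (fun j (_ : j ∈ Finset.univ) => key (γs j) (hγs j)),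
    Finset.prod_mul_distrib, Finset.prod_const, Finset.card_univ, Fintype.card_fin]
  rw [Finset.prod_comm (f := fun (j : Fin n) (i : Fin d) => t i ^ q (γs j) i)]
  rw [Finset.prod_congr rfl
    (fun (i : Fin d) (_ : i ∈ Finset.univ) => Finset.prod_pow_eq_pow_sum Finset.univ (fun j => q (γs j) i) (t i))]
  have h1 : ((∑ γ ∈ Pδ, (K γ : ℝ) * ∏ i, t i ^ q γ i) * F δ 1) ^ n = 1 := by rw [hS, one_pow]
  rw [show F δ 1 ^ n * (∏ i, t i ^ ∑ j, q (γs j) i) *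
      (∑ γ ∈ Pδ, (K γ : ℝ) * ∏ i, t i ^ q γ i) ^ n
      = (∏ i, t i ^ ∑ j, q (γs j) i) *
        ((∑ γ ∈ Pδ, (K γ : ℝ) * ∏ i, t i ^ q γ i) * F δ 1) ^ n from by ring, h1, mul_one]
end

section
/- Let f : T̂_δ → ℝ be a nonnegative algebra morphism with f(s_δ,1)=1 and mean vector M_f ∈ Δ, and let Π_δ(f) = {γ ∈ Π_δ : f(e^γ,1) ≠ 0}. Then there exists a dominant face F of the weight polytope K(δ) such that Π_δ(f) = Π_δ ∩ F. -/
open scoped RealInnerProductSpace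

open Relation

/-!
Call a simple root `αᵢ` active if some string `β, β + αᵢ` lies in the support of `f`. The
support is closed under going up a root string (the assumed lemma), and closed under going down
an active one: if `f(β), f(β + αᵢ), f(γ) ≠ 0` then `f(γ - αᵢ) f(β + αᵢ) = f(γ) f(β) ≠ 0` by
multiplicativity. Take a linear functional `l` with `l(αᵢ) = 0` on active roots and `l(αᵢ) = 1`
on the others. Every weight is joined to `δ` by a chain of root steps, along which `l`
increases; hence the support is exactly the set of weights on which `l` attains its maximum
`l(δ)`, i.e. its trace on the exposed face of `K(δ)` cut out by `l`. The mean vector is a convex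
combination of support weights, so it is a dominant point of that face.
-/

theorem LinearIndependent.exists_linearMap_apply_eq {K V ι : Type*} [Field K] [AddCommGroup V]
    [Module K V] {α : ι → V} (hα : LinearIndependent K α) (g : ι → K) :
    ∃ l : V →ₗ[K] K, ∀ i, l (α i) = g i := by
  obtain ⟨l, hl⟩ := LinearMap.exists_extend ((Module.Basis.span hα).constr K g)
  refine ⟨l, fun i => ?_⟩
  have := LinearMap.congr_fun hl (Module.Basis.span hα i)
  rwa [LinearMap.comp_apply, Module.Basis.constr_basis, Submodule.subtype_apply,
    Module.Basis.span_apply] at this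

theorem LinearIndependent.exists_linearMap_nonneg_and_eq_zero_iff {V ι : Type*}
    [AddCommGroup V] [Module ℝ V] {α : ι → V} (hα : LinearIndependent ℝ α) (p : ι → Prop) :
    ∃ l : V →ₗ[ℝ] ℝ, ∀ i, 0 ≤ l (α i) ∧ (l (α i) = 0 ↔ p i) := by
  classical
  obtain ⟨l, hl⟩ := hα.exists_linearMap_apply_eq fun i => if p i then 0 else 1
  exact ⟨l, fun i => by by_cases h : p i <;> simp [hl, h]⟩

theorem Convex.sum_mem_of_ne_zero {E ι : Type*} [AddCommGroup E] [Module ℝ E] {s : Set E}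
    (hs : Convex ℝ s) {t : Finset ι} {w : ι → ℝ} {z : ι → E} (h₀ : ∀ i ∈ t, 0 ≤ w i)
    (h₁ : ∑ i ∈ t, w i = 1) (hz : ∀ i ∈ t, w i ≠ 0 → z i ∈ s) :
    ∑ i ∈ t, w i • z i ∈ s := by
  classical
  rw [← Finset.sum_filter_of_ne (p := fun i => w i ≠ 0) fun i _ => left_ne_zero_of_smul]
  refine hs.sum_mem (fun i hi => h₀ i (Finset.mem_filter.mp hi).1) ?_
    (fun i hi => hz i (Finset.mem_filter.mp hi).1 (Finset.mem_filter.mp hi).2)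
  rwa [Finset.sum_filter_ne_zero]

theorem ContinuousLinearMap.mem_toExposed_convexHull_iff {E : Type*} [AddCommGroup E]
    [Module ℝ E] [TopologicalSpace E] {s : Set E} {l : StrongDual ℝ E} {x δ : E} (hδ : δ ∈ s)
    (hmax : ∀ y ∈ s, l y ≤ l δ) (hx : x ∈ s) :
    x ∈ l.toExposed (convexHull ℝ s) ↔ l x = l δ := by
  have hhull : ∀ y ∈ convexHull ℝ s, l y ≤ l δ := fun y hy =>
    convexHull_min hmax (convex_halfSpace_le l.toLinearMap.isLinear (l δ)) hy
  refine ⟨fun h => ?_, fun h => ⟨subset_convexHull ℝ s hx, fun y hy => h ▸ hhull y hy⟩⟩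
  exact (hhull x (subset_convexHull ℝ s hx)).antisymm (h.2 δ (subset_convexHull ℝ s hδ))

section RootStrings

variable {V ι R : Type*} [AddCommGroup V] {P : Set V} {α : ι → V}

variable (P α) in
def RootStep (γ γ' : V) : Prop :=
  γ ∈ P ∧ γ' ∈ P ∧ ∃ i, γ' - γ = α i

theorem reflTransGen_rootStep_of_chain {r : ℕ} {c : ℕ → V} (hcP : ∀ j ≤ r, c j ∈ P)
    (hcs : ∀ j < r, ∃ i, c (j + 1) - c j = α i) :
    ReflTransGen (RootStep P α) (c 0) (c r) := by
  induction r with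
  | zero => rfl
  | succ r ih =>
    exact (ih (fun j hj => hcP j (by omega)) fun j hj => hcs j (by omega)).tail
      ⟨hcP r (by omega), hcP (r + 1) le_rfl, hcs r (by omega)⟩

theorem RootStep.le {F : Type*} [FunLike F V ℝ] [AddMonoidHomClass F V ℝ] {l : F}
    (hl : ∀ i, 0 ≤ l (α i)) {γ γ' : V} (h : RootStep P α γ γ') : l γ ≤ l γ' := by
  obtain ⟨-, -, i, hi⟩ := h
  have := map_sub l γ' γ
  rw [hi] at this
  linarith [hl i]

theorem Relation.ReflTransGen.rootStep_le {F : Type*} [FunLike F V ℝ] [AddMonoidHomClass F V ℝ]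
    {l : F} (hl : ∀ i, 0 ≤ l (α i)) {γ γ' : V} (h : ReflTransGen (RootStep P α) γ γ') :
    l γ ≤ l γ' := by
  induction h with
  | refl => rfl
  | tail _ hstep ih => exact ih.trans (hstep.le hl)

variable [MulZeroClass R] (f : V → R)

variable (P α) in
def IsActiveRoot (i : ι) : Prop :=
  ∃ β ∈ P, f β ≠ 0 ∧ β + α i ∈ P ∧ f (β + α i) ≠ 0

variable {f}

theorem Relation.ReflTransGen.rootStep_ne_zero
    (hup : ∀ γ γ', RootStep P α γ γ' → f γ ≠ 0 → f γ' ≠ 0)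
    {γ γ' : V} (h : ReflTransGen (RootStep P α) γ γ') (hγ : f γ ≠ 0) : f γ' ≠ 0 := by
  induction h with
  | refl => exact hγ
  | tail _ hstep ih => exact hup _ _ hstep ih

theorem ne_zero_of_rootStep_of_isActiveRoot [NoZeroDivisors R] {g : V → R}
    (hmul : ∀ x ∈ P, ∀ y ∈ P, g (x + y) = f x * f y) {γ γ' : V} {i : ι}
    (hi : IsActiveRoot P α f i) (hγ : γ ∈ P) (hγ' : γ' ∈ P) (hstep : γ' - γ = α i)
    (h : f γ' ≠ 0) : f γ ≠ 0 := by
  obtain ⟨β, hβ, hβ0, hβi, hβi0⟩ := hi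
  have hswap : γ + (β + α i) = γ' + β := by rw [← hstep]; abel
  have hprod : f γ * f (β + α i) = f γ' * f β := by
    rw [← hmul γ hγ _ hβi, hswap, hmul γ' hγ' β hβ]
  exact left_ne_zero_of_mul (hprod ▸ mul_ne_zero h hβ0)

theorem Relation.ReflTransGen.rootStep_eq_of_ne_zero {F : Type*} [FunLike F V ℝ]
    [AddMonoidHomClass F V ℝ] {l : F} (hl : ∀ i, IsActiveRoot P α f i → l (α i) = 0)
    (hup : ∀ γ γ', RootStep P α γ γ' → f γ ≠ 0 → f γ' ≠ 0) {γ γ' : V}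
    (h : ReflTransGen (RootStep P α) γ γ') (hγ : f γ ≠ 0) : l γ = l γ' := by
  induction h with
  | refl => rfl
  | @tail b c hγb hstep ih =>
    obtain ⟨hb, hc, i, hi⟩ := hstep
    have hb0 : f b ≠ 0 := hγb.rootStep_ne_zero hup hγ
    have hbc : b + α i = c := by rw [← hi, add_sub_cancel]
    have hactive : IsActiveRoot P α f i :=
      ⟨b, hb, hb0, hbc ▸ hc, hbc ▸ hup b c ⟨hb, hc, i, hi⟩ hb0⟩
    rw [ih, ← hbc, map_add, hl i hactive, add_zero]

theorem Relation.ReflTransGen.rootStep_ne_zero_of_le [NoZeroDivisors R] {F : Type*}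
    [FunLike F V ℝ] [AddMonoidHomClass F V ℝ] {l : F} (hl : ∀ i, 0 ≤ l (α i))
    (hl0 : ∀ i, l (α i) = 0 → IsActiveRoot P α f i) {g : V → R}
    (hmul : ∀ x ∈ P, ∀ y ∈ P, g (x + y) = f x * f y) {γ γ' : V}
    (h : ReflTransGen (RootStep P α) γ γ') (hle : l γ' ≤ l γ) (hγ' : f γ' ≠ 0) : f γ ≠ 0 := by
  induction h using Relation.ReflTransGen.head_induction_on with
  | refl => exact hγ'
  | @head a b hstep hrest ih =>
    have hab : l a ≤ l b := hstep.le hl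
    have hb : l b ≤ l γ' := hrest.rootStep_le hl
    obtain ⟨ha, hb', i, hi⟩ := hstep
    have hαi : l (α i) = 0 := by rw [← hi, map_sub]; linarith
    exact ne_zero_of_rootStep_of_isActiveRoot hmul (hl0 i hαi) ha hb' hi (ih (hle.trans hab))

end RootStrings

theorem support_is_dominant_face_general
    (d : ℕ)
    (α : Fin d → EuclideanSpace ℝ (Fin d))
    (hα : LinearIndependent ℝ α)
    (Pδ : Finset (EuclideanSpace ℝ (Fin d)))
    (K : EuclideanSpace ℝ (Fin d) → ℕ)
    (δ : EuclideanSpace ℝ (Fin d)) (hδ : δ ∈ Pδ)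
    -- background facts on the weight system
    (hchain : ∀ γ ∈ Pδ, ∃ (r : ℕ) (c : ℕ → EuclideanSpace ℝ (Fin d)),
      c 0 = γ ∧ c r = δ ∧ (∀ j ≤ r, c j ∈ Pδ) ∧ ∀ j < r, ∃ i, c (j + 1) - c j = α i)
    -- the morphism `f`, given through its values on monomials
    (F : EuclideanSpace ℝ (Fin d) → ℕ → ℝ)
    (hFmul : ∀ (n m : ℕ) (xs : Fin n → EuclideanSpace ℝ (Fin d))
      (ys : Fin m → EuclideanSpace ℝ (Fin d)),
      (∀ j, xs j ∈ Pδ) → (∀ j, ys j ∈ Pδ) →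
      F ((∑ j, xs j) + ∑ j, ys j) (n + m) = F (∑ j, xs j) n * F (∑ j, ys j) m)
    (hFnn : ∀ γ ∈ Pδ, 0 ≤ F γ 1)
    (hFnorm : ∑ γ ∈ Pδ, (K γ : ℝ) * F γ 1 = 1)
    (hmean : ∀ i, 0 ≤ ⟪α i, ∑ γ ∈ Pδ, (K γ : ℝ) • F γ 1 • γ⟫)
    -- assumed lemma: vanishing of `f` propagates down simple-root strings
    (hlem : ∀ i, ∀ γ ∈ Pδ, γ - α i ∈ Pδ → F γ 1 = 0 → F (γ - α i) 1 = 0) :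
    ∃ F₀ : Set (EuclideanSpace ℝ (Fin d)),
      Convex ℝ F₀ ∧
      IsExtreme ℝ (convexHull ℝ (↑Pδ : Set (EuclideanSpace ℝ (Fin d)))) F₀ ∧
      (∃ x ∈ F₀, ∀ i, 0 ≤ ⟪α i, x⟫) ∧
      ∀ γ ∈ Pδ, (F γ 1 ≠ 0 ↔ γ ∈ F₀) := by
  have hmul : ∀ x ∈ Pδ, ∀ y ∈ Pδ, F (x + y) 2 = F x 1 * F y 1 := fun x hx y hy => by
    simpa using hFmul 1 1 (fun _ => x) (fun _ => y) (fun _ => hx) (fun _ => hy)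
  have hup : ∀ γ γ', RootStep ↑Pδ α γ γ' → F γ 1 ≠ 0 → F γ' 1 ≠ 0 := by
    rintro γ γ' ⟨hγ, hγ', i, hi⟩ hγ0 hγ'0
    obtain rfl : γ = γ' - α i := by rw [← hi, sub_sub_cancel]
    exact hγ0 (hlem i γ' hγ' hγ hγ'0)
  have hreach : ∀ γ ∈ Pδ, ReflTransGen (RootStep ↑Pδ α) γ δ := fun γ hγ => by
    obtain ⟨r, c, rfl, rfl, hcP, hcs⟩ := hchain γ hγ
    exact reflTransGen_rootStep_of_chain hcP hcs
  have hδ0 : F δ 1 ≠ 0 := by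
    obtain ⟨γ, hγ, hγ0⟩ := Finset.exists_ne_zero_of_sum_ne_zero (hFnorm ▸ one_ne_zero)
    exact (hreach γ hγ).rootStep_ne_zero hup (right_ne_zero_of_mul hγ0)
  obtain ⟨l, hl⟩ := hα.exists_linearMap_nonneg_and_eq_zero_iff (IsActiveRoot ↑Pδ α (F · 1))
  set L := LinearMap.toContinuousLinearMap l
  have hL : ∀ i, 0 ≤ L (α i) ∧ (L (α i) = 0 ↔ IsActiveRoot ↑Pδ α (F · 1) i) := hl
  have hsupp : ∀ γ ∈ Pδ, F γ 1 ≠ 0 ↔ L γ = L δ := fun γ hγ =>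
    ⟨(hreach γ hγ).rootStep_eq_of_ne_zero (fun i => (hL i).2.mpr) hup, fun h =>
      (hreach γ hγ).rootStep_ne_zero_of_le (fun i => (hL i).1) (fun i => (hL i).2.mp)
        (g := (F · 2)) hmul h.ge hδ0⟩
  have hface : ∀ γ ∈ Pδ, γ ∈ L.toExposed (convexHull ℝ ↑Pδ) ↔ L γ = L δ := fun γ hγ =>
    L.mem_toExposed_convexHull_iff hδ
      (fun y hy => (hreach y hy).rootStep_le fun i => (hL i).1) hγ
  have hexposed := ContinuousLinearMap.toExposed.isExposed (l := L) (A := convexHull ℝ ↑Pδ)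
  refine ⟨_, hexposed.convex (convex_convexHull ℝ _), hexposed.isExtreme, ⟨_, ?_, hmean⟩,
    fun γ hγ => (hsupp γ hγ).trans (hface γ hγ).symm⟩
  simp_rw [smul_smul]
  exact (hexposed.convex (convex_convexHull ℝ _)).sum_mem_of_ne_zero
    (fun γ hγ => mul_nonneg (Nat.cast_nonneg _) (hFnn γ hγ)) hFnorm
    fun γ hγ h => (hface γ hγ).mpr ((hsupp γ hγ).mp (right_ne_zero_of_mul h))

/-- Let `F` encode a nonnegative algebra morphism `f : T̂_δ → ℝ` with
`f(s_δ,1) = 1` and mean vector in the dominant chamber `Δ`, and let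
`Π_δ(f) = {γ ∈ Π_δ : f(e^γ,1) ≠ 0}`.  Then there is a dominant face `F₀` of the weight
polytope `K(δ) = Conv(Π_δ)` such that `Π_δ(f) = Π_δ ∩ F₀`. -/
theorem support_is_dominant_face
    (d : ℕ)
    (α : Fin d → EuclideanSpace ℝ (Fin d))
    (hα : LinearIndependent ℝ α)
    (Pδ : Finset (EuclideanSpace ℝ (Fin d)))
    (K : EuclideanSpace ℝ (Fin d) → ℕ)
    (δ : EuclideanSpace ℝ (Fin d)) (hδ : δ ∈ Pδ)
    (hKpos : ∀ γ ∈ Pδ, 0 < K γ)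
    -- background facts on the weight system
    (hrefl : ∀ i, ∀ γ ∈ Pδ,
      (γ - (2 * ⟪γ, α i⟫ / ⟪α i, α i⟫) • α i) ∈ Pδ ∧
      K (γ - (2 * ⟪γ, α i⟫ / ⟪α i, α i⟫) • α i) = K γ)
    (hstring : ∀ γ ∈ Pδ, ∀ i, 0 < ⟪γ, α i⟫ → γ - α i ∈ Pδ)
    (hchain : ∀ γ ∈ Pδ, ∃ (r : ℕ) (c : ℕ → EuclideanSpace ℝ (Fin d)),
      c 0 = γ ∧ c r = δ ∧ (∀ j ≤ r, c j ∈ Pδ) ∧ ∀ j < r, ∃ i, c (j + 1) - c j = α i)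
    -- the morphism `f`, given through its values on monomials
    (F : EuclideanSpace ℝ (Fin d) → ℕ → ℝ)
    (hFmul : ∀ (n m : ℕ) (xs : Fin n → EuclideanSpace ℝ (Fin d))
      (ys : Fin m → EuclideanSpace ℝ (Fin d)),
      (∀ j, xs j ∈ Pδ) → (∀ j, ys j ∈ Pδ) →
      F ((∑ j, xs j) + ∑ j, ys j) (n + m) = F (∑ j, xs j) n * F (∑ j, ys j) m)
    (hFnn : ∀ γ ∈ Pδ, 0 ≤ F γ 1)
    (hFnorm : ∑ γ ∈ Pδ, (K γ : ℝ) * F γ 1 = 1)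
    (hmean : ∀ i, 0 ≤ ⟪α i, ∑ γ ∈ Pδ, (K γ : ℝ) • F γ 1 • γ⟫)
    -- assumed lemma: vanishing of `f` propagates down simple-root strings
    (hlem : ∀ i, ∀ γ ∈ Pδ, γ - α i ∈ Pδ → F γ 1 = 0 → F (γ - α i) 1 = 0) :
    ∃ F₀ : Set (EuclideanSpace ℝ (Fin d)),
      Convex ℝ F₀ ∧
      IsExtreme ℝ (convexHull ℝ (↑Pδ : Set (EuclideanSpace ℝ (Fin d)))) F₀ ∧
      (∃ x ∈ F₀, ∀ i, 0 ≤ ⟪α i, x⟫) ∧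
      ∀ γ ∈ Pδ, (F γ 1 ≠ 0 ↔ γ ∈ F₀) :=
  support_is_dominant_face_general d α hα Pδ K δ hδ hchain F hFmul hFnn hFnorm hmean hlem
end
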